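/- Let X be a real Banach space, Y a real Banach space, and v ∈ X** with ‖v‖ = 1 such that ‖w + v ⊗ y‖ = ‖w‖ + ‖y‖ holds for every w ∈ X ⊗ Y and every y ∈ Y, where the norm of w + v ⊗ y is the projective norm of X** ⊗ Y. Then the natural inclusion of (X ⊕ ℝv) ⊗ Y into X** ⊗ Y is isometric when both algebraic tensor products carry their projective norms, X ⊕ ℝv being the subspace of X** spanned by X and v with the norm induced from X**. -/

import Mathlib

open scoped TensorProduct
open NormedSpace

/-- The projective norm of an element of the algebraic tensor product of two normed
spaces: the infimum of `Σ ‖eᵢ‖ ‖fᵢ‖` over all finite representations `u = Σ eᵢ ⊗ fᵢ`. -/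
noncomputable def projNorm (E F : Type*) [NormedAddCommGroup E] [NormedAddCommGroup F]
    [NormedSpace ℝ E] [NormedSpace ℝ F] (u : E ⊗[ℝ] F) : ℝ :=
  sInf {s : ℝ | ∃ (n : ℕ) (e : Fin n → E) (f : Fin n → F),
    u = ∑ i, e i ⊗ₜ[ℝ] f i ∧ s = ∑ i, ‖e i‖ * ‖f i‖}

/-!
Write `Z = X ⊕ ℝv`. Every `w ∈ Z ⊗ Y` has the form `w = u + v ⊗ y` with `u ∈ X ⊗ Y`.
Since the inclusion `Z → X**` is norm-one, the projective norm can only drop when `w` is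
pushed into `X** ⊗ Y`; conversely, by the triangle inequality in `Z ⊗ Y`,
`‖w‖_Z ≤ ‖u‖_X + ‖v‖ ‖y‖ = ‖u‖_X + ‖y‖`, and the hypothesis on `v` says that the right-hand
side is exactly the projective norm of `w` in `X** ⊗ Y`.
-/

namespace TensorProduct

variable {R M N P : Type*} [CommSemiring R] [AddCommMonoid M] [AddCommMonoid N]
  [AddCommMonoid P] [Module R M] [Module R N] [Module R P]

theorem exists_fin_sum_tmul_eq (x : M ⊗[R] N) :
    ∃ (n : ℕ) (m : Fin n → M) (p : Fin n → N), x = ∑ i, m i ⊗ₜ[R] p i := by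
  induction x with
  | zero => exact ⟨0, ![], ![], by simp⟩
  | tmul a b => exact ⟨1, ![a], ![b], by simp⟩
  | add a b ha hb =>
    obtain ⟨n, m, p, rfl⟩ := ha
    obtain ⟨n', m', p', rfl⟩ := hb
    exact ⟨n + n', Fin.append m m', Fin.append p p', by simp [Fin.sum_univ_add]⟩

theorem exists_eq_map_add_tmul (f : M →ₗ[R] N) (n : N)
    (hspan : ∀ z : N, ∃ (m : M) (t : R), z = f m + t • n) (x : N ⊗[R] P) :
    ∃ (u : M ⊗[R] P) (p : P), x = map f LinearMap.id u + n ⊗ₜ[R] p := by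
  induction x with
  | zero => exact ⟨0, 0, by simp⟩
  | tmul z p =>
    obtain ⟨m, t, rfl⟩ := hspan z
    exact ⟨m ⊗ₜ p, t • p, by rw [add_tmul, smul_tmul, map_tmul, LinearMap.id_apply]⟩
  | add a b ha hb =>
    obtain ⟨u, p, rfl⟩ := ha
    obtain ⟨u', p', rfl⟩ := hb
    exact ⟨u + u', p + p', by rw [map_add, tmul_add]; abel⟩

end TensorProduct

section ProjNorm

variable {E F G : Type*} [NormedAddCommGroup E] [NormedSpace ℝ E]
  [NormedAddCommGroup F] [NormedSpace ℝ F] [NormedAddCommGroup G] [NormedSpace ℝ G]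

theorem projNorm_set_nonempty (u : E ⊗[ℝ] F) :
    {s : ℝ | ∃ (n : ℕ) (e : Fin n → E) (f : Fin n → F),
      u = ∑ i, e i ⊗ₜ[ℝ] f i ∧ s = ∑ i, ‖e i‖ * ‖f i‖}.Nonempty := by
  obtain ⟨n, e, f, h⟩ := TensorProduct.exists_fin_sum_tmul_eq u
  exact ⟨_, n, e, f, h, rfl⟩

theorem projNorm_le_sum {u : E ⊗[ℝ] F} {n : ℕ} {e : Fin n → E} {f : Fin n → F}
    (h : u = ∑ i, e i ⊗ₜ[ℝ] f i) : projNorm E F u ≤ ∑ i, ‖e i‖ * ‖f i‖ := by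
  refine csInf_le ⟨0, ?_⟩ ⟨n, e, f, h, rfl⟩
  rintro s ⟨n, e, f, -, rfl⟩
  positivity

theorem exists_sum_lt_projNorm_add (u : E ⊗[ℝ] F) {ε : ℝ} (hε : 0 < ε) :
    ∃ (n : ℕ) (e : Fin n → E) (f : Fin n → F),
      u = ∑ i, e i ⊗ₜ[ℝ] f i ∧ ∑ i, ‖e i‖ * ‖f i‖ < projNorm E F u + ε := by
  obtain ⟨_, ⟨n, e, f, h, rfl⟩, hlt⟩ := Real.lt_sInf_add_pos (projNorm_set_nonempty u) hε
  exact ⟨n, e, f, h, hlt⟩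

theorem projNorm_tmul_le (e : E) (f : F) : projNorm E F (e ⊗ₜ[ℝ] f) ≤ ‖e‖ * ‖f‖ := by
  simpa using projNorm_le_sum (e := ![e]) (f := ![f]) (by simp)

theorem projNorm_add_le (a b : E ⊗[ℝ] F) :
    projNorm E F (a + b) ≤ projNorm E F a + projNorm E F b := by
  refine le_of_forall_pos_lt_add fun ε hε => ?_
  obtain ⟨n, e, f, rfl, ha⟩ := exists_sum_lt_projNorm_add a (half_pos hε)
  obtain ⟨n', e', f', rfl, hb⟩ := exists_sum_lt_projNorm_add b (half_pos hε)
  have hsum : projNorm E F (∑ i, e i ⊗ₜ[ℝ] f i + ∑ i, e' i ⊗ₜ[ℝ] f' i)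
      ≤ ∑ i, ‖Fin.append e e' i‖ * ‖Fin.append f f' i‖ :=
    projNorm_le_sum (by simp [Fin.sum_univ_add])
  simp only [Fin.sum_univ_add, Fin.append_left, Fin.append_right] at hsum
  linarith

theorem projNorm_map_le (L : E →ₗ[ℝ] G) (hL : ∀ x, ‖L x‖ ≤ ‖x‖) (u : E ⊗[ℝ] F) :
    projNorm G F (TensorProduct.map L LinearMap.id u) ≤ projNorm E F u := by
  refine le_csInf (projNorm_set_nonempty u) ?_
  rintro _ ⟨n, e, f, rfl, rfl⟩
  refine (projNorm_le_sum (e := fun i => L (e i)) (f := f) (by simp)).trans ?_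
  gcongr with i
  exact hL _

theorem projNorm_map_subtype_le (Z : Submodule ℝ E) (u : Z ⊗[ℝ] F) :
    projNorm E F (TensorProduct.map Z.subtype LinearMap.id u) ≤ projNorm Z F u :=
  projNorm_map_le Z.subtype (fun _ => le_rfl) u

theorem projNorm_map_subtype_sup_span_eq {X : Type*} [NormedAddCommGroup X] [NormedSpace ℝ X]
    (J : X →ₗ[ℝ] E) (hJ : ∀ x, ‖J x‖ ≤ ‖x‖) (v : E) (hv1 : ‖v‖ ≤ 1)
    (hv : ∀ (w : X ⊗[ℝ] F) (y : F),
      projNorm E F (TensorProduct.map J LinearMap.id w + v ⊗ₜ[ℝ] y) = projNorm X F w + ‖y‖)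
    (w : ↥(LinearMap.range J ⊔ Submodule.span ℝ {v}) ⊗[ℝ] F) :
    projNorm E F (TensorProduct.map (LinearMap.range J ⊔ Submodule.span ℝ {v}).subtype
      LinearMap.id w) = projNorm _ F w := by
  generalize hZ : LinearMap.range J ⊔ Submodule.span ℝ {v} = Z at w ⊢
  let vZ : Z := ⟨v, hZ ▸ Submodule.mem_sup_right (Submodule.mem_span_singleton_self v)⟩
  let JZ : X →ₗ[ℝ] Z :=
    J.codRestrict Z fun x => hZ ▸ Submodule.mem_sup_left (LinearMap.mem_range_self J x)
  have hspan : ∀ z : Z, ∃ (x : X) (t : ℝ), z = JZ x + t • vZ := by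
    rintro ⟨z, hz⟩
    rw [← hZ] at hz
    obtain ⟨_, ⟨x, rfl⟩, _, hb, rfl⟩ := Submodule.mem_sup.mp hz
    obtain ⟨t, rfl⟩ := Submodule.mem_span_singleton.mp hb
    exact ⟨x, t, rfl⟩
  obtain ⟨u, y, rfl⟩ := TensorProduct.exists_eq_map_add_tmul JZ vZ hspan w
  have himage : TensorProduct.map Z.subtype LinearMap.id
      (TensorProduct.map JZ LinearMap.id u + vZ ⊗ₜ[ℝ] y)
        = TensorProduct.map J LinearMap.id u + v ⊗ₜ[ℝ] y := by
    rw [map_add, ← LinearMap.comp_apply, ← TensorProduct.map_comp]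
    rfl
  refine le_antisymm (projNorm_map_subtype_le Z _) ?_
  calc projNorm Z F (TensorProduct.map JZ LinearMap.id u + vZ ⊗ₜ[ℝ] y)
      ≤ projNorm X F u + ‖v‖ * ‖y‖ :=
        (projNorm_add_le _ _).trans (add_le_add (projNorm_map_le JZ hJ u) (projNorm_tmul_le _ _))
    _ ≤ projNorm X F u + ‖y‖ := by gcongr; exact mul_le_of_le_one_left (norm_nonneg _) hv1
    _ = _ := by rw [himage, hv]

end ProjNorm

theorem stmt_6_general (X Y : Type*) [NormedAddCommGroup X] [NormedSpace ℝ X]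
    [NormedAddCommGroup Y] [NormedSpace ℝ Y]
    (v : StrongDual ℝ (StrongDual ℝ X)) (hv1 : ‖v‖ = 1)
    (hv : ∀ (w : X ⊗[ℝ] Y) (y : Y),
      projNorm (StrongDual ℝ (StrongDual ℝ X)) Y
        (TensorProduct.map (inclusionInDoubleDual ℝ X).toLinearMap LinearMap.id w
          + v ⊗ₜ[ℝ] y)
      = projNorm X Y w + ‖y‖) :
    ∀ w : ↥(LinearMap.range (inclusionInDoubleDual ℝ X).toLinearMap
        ⊔ Submodule.span ℝ {v}) ⊗[ℝ] Y,
      projNorm (StrongDual ℝ (StrongDual ℝ X)) Y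
        (TensorProduct.map
          (LinearMap.range (inclusionInDoubleDual ℝ X).toLinearMap
            ⊔ Submodule.span ℝ {v}).subtype LinearMap.id w)
      = @projNorm (↥(LinearMap.range (inclusionInDoubleDual ℝ X).toLinearMap
          ⊔ Submodule.span ℝ {v})) Y
          (Submodule.normedAddCommGroup (𝕜 := ℝ) (E := StrongDual ℝ (StrongDual ℝ X)) _) _
          (Submodule.normedSpace (𝕜 := ℝ) (R := ℝ) (E := StrongDual ℝ (StrongDual ℝ X)) _) _ w :=
  projNorm_map_subtype_sup_span_eq _ (fun x => (inclusionInDoubleDualLi ℝ).norm_map x |>.le)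
    v hv1.le hv

/-- let `X`, `Y` be Banach spaces and `v ∈ S_{X**}` be such that
`‖w + v ⊗ y‖ = ‖w‖ + ‖y‖` (projective norm in `X** ⊗ Y`) for every `w ∈ X ⊗ Y` and
every `y ∈ Y`. Then the natural inclusion of `(X ⊕ ℝv) ⊗ Y` into `X** ⊗ Y` is isometric
for the projective norms, where `X ⊕ ℝv` is the subspace of `X**` spanned by `X` and `v`
with the induced norm. -/
theorem stmt_6 (X Y : Type*) [NormedAddCommGroup X] [NormedSpace ℝ X] [CompleteSpace X]
    [NormedAddCommGroup Y] [NormedSpace ℝ Y] [CompleteSpace Y]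
    (v : StrongDual ℝ (StrongDual ℝ X)) (hv1 : ‖v‖ = 1)
    (hv : ∀ (w : X ⊗[ℝ] Y) (y : Y),
      projNorm (StrongDual ℝ (StrongDual ℝ X)) Y
        (TensorProduct.map (inclusionInDoubleDual ℝ X).toLinearMap LinearMap.id w
          + v ⊗ₜ[ℝ] y)
      = projNorm X Y w + ‖y‖) :
    ∀ w : ↥(LinearMap.range (inclusionInDoubleDual ℝ X).toLinearMap
        ⊔ Submodule.span ℝ {v}) ⊗[ℝ] Y,
      projNorm (StrongDual ℝ (StrongDual ℝ X)) Y
        (TensorProduct.map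
          (LinearMap.range (inclusionInDoubleDual ℝ X).toLinearMap
            ⊔ Submodule.span ℝ {v}).subtype LinearMap.id w)
      = @projNorm (↥(LinearMap.range (inclusionInDoubleDual ℝ X).toLinearMap
          ⊔ Submodule.span ℝ {v})) Y
          (Submodule.normedAddCommGroup (𝕜 := ℝ) (E := StrongDual ℝ (StrongDual ℝ X)) _) _
          (Submodule.normedSpace (𝕜 := ℝ) (R := ℝ) (E := StrongDual ℝ (StrongDual ℝ X)) _) _ w :=
  stmt_6_general X Y v hv1 hv
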